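/- Let λ be a finite Borel measure on X × X, where X is a compact metric space, and let μ be a σ-finite Borel measure on X such that (π₁)_*λ ≪ μ and (π₂)_*λ ≪ μ, where π₁, π₂ : X × X → X are the coordinate projections. Let θ : X × X → X × X be the flip map θ(x,y) = (y,x), and assume θ_*λ ≪ λ and λ ≪ θ_*λ. Let (λ_t^1) be a (π₁,μ)-disintegration of λ and (λ_t^2) a (π₂,μ)-disintegration of λ. Then for μ-a.e. t, λ_t^1 ≪ θ_*(λ_t^2) and θ_*(λ_t^2) ≪ λ_t^1. In particular, for μ-a.e. t, if λ_t^2 has an atom at (s,t) then λ_t^1 has an atom at (t,s). -/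

import Mathlib

open MeasureTheory ENNReal

/-- A `(T, μ)`-disintegration of a measure `ν` on `X`. -/
def IsDisintegration {X Y : Type*} [MeasurableSpace X] [MeasurableSpace Y]
    (ν : Measure X) (T : X → Y) (μ : Measure Y) (lam : Y → Measure X) : Prop :=
  (∀ᵐ t ∂μ, lam t ((T ⁻¹' {t})ᶜ) = 0) ∧
  (∀ f : X → ℝ≥0∞, Measurable f →
      AEMeasurable (fun t => ∫⁻ x, f x ∂(lam t)) μ) ∧
  (∀ f : X → ℝ≥0∞, Measurable f →
      ∫⁻ x, f x ∂ν = ∫⁻ t, ∫⁻ x, f x ∂(lam t) ∂μ)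

/-! Write `θ_*ν = h • ν` with `h = d(θ_*ν)/dν`. Then `θ_*λ²_t` and `h • λ¹_t` are two
`(π₁, μ)`-disintegrations of `θ_*ν`. Since `X × X` is countably generated, disintegrations are
unique, so `θ_*λ²_t = h • λ¹_t` for `μ`-a.e. `t`, whence `θ_*λ²_t ≪ λ¹_t`. The reverse relation
follows by exchanging the roles of `ν` and `θ_*ν`, using `ν ≪ θ_*ν`. -/

theorem MeasurableSpace.exists_countable_isPiSystem_generateFrom
    (Z : Type*) [m : MeasurableSpace Z] [CountablyGenerated Z] :
    ∃ C : Set (Set Z), C.Countable ∧ IsPiSystem C ∧ (∀ s ∈ C, MeasurableSet s) ∧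
      m = generateFrom C := by
  set C : Set (Set Z) := (fun u => ⋂₀ u) '' {u | u.Finite ∧ u ⊆ countableGeneratingSet Z}
  have hC : ∀ s ∈ C, MeasurableSet s := by
    rintro _ ⟨u, ⟨hu, hub⟩, rfl⟩
    exact .sInter hu.countable fun s hs => measurableSet_countableGeneratingSet (hub hs)
  refine ⟨C, (Set.countable_ofPred_finite_subset countable_countableGeneratingSet).image _,
    ?_, hC, le_antisymm ?_ (generateFrom_le hC)⟩
  · rintro _ ⟨u₁, ⟨hu₁, hu₁b⟩, rfl⟩ _ ⟨u₂, ⟨hu₂, hu₂b⟩, rfl⟩ _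
    exact ⟨u₁ ∪ u₂, ⟨hu₁.union hu₂, Set.union_subset hu₁b hu₂b⟩, Set.sInter_union u₁ u₂⟩
  · rw [← generateFrom_countableGeneratingSet (α := Z)]
    exact generateFrom_mono fun s hs =>
      ⟨{s}, ⟨Set.finite_singleton s, Set.singleton_subset_iff.2 hs⟩, Set.sInter_singleton s⟩

namespace IsDisintegration

variable {Z Z' Y : Type*} [MeasurableSpace Z] [MeasurableSpace Z'] [MeasurableSpace Y]
  {ν ρ : Measure Z} {T : Z → Y} {μ : Measure Y} {lam lam' : Y → Measure Z}

theorem aemeasurable_apply (hd : IsDisintegration ν T μ lam) {A : Set Z} (hA : MeasurableSet A) :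
    AEMeasurable (fun t => lam t A) μ := by
  simpa only [lintegral_indicator_one hA] using hd.2.1 _ (measurable_one.indicator hA)

theorem measure_eq_lintegral (hd : IsDisintegration ν T μ lam) {A : Set Z}
    (hA : MeasurableSet A) : ν A = ∫⁻ t, lam t A ∂μ := by
  simpa only [lintegral_indicator_one hA] using hd.2.2 _ (measurable_one.indicator hA)

theorem ae_measure_inter_preimage_eq (hd : IsDisintegration ν T μ lam) (A : Set Z) (B : Set Y) :
    ∀ᵐ t ∂μ, lam t (A ∩ T ⁻¹' B) = B.indicator (fun t => lam t A) t := by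
  filter_upwards [hd.1] with t ht
  by_cases htB : t ∈ B
  · rw [Set.indicator_of_mem htB]
    exact measure_inter_conull <| measure_mono_null
      (Set.compl_subset_compl.2 fun x (hx : T x = t) => show T x ∈ B from hx ▸ htB) ht
  · rw [Set.indicator_of_notMem htB]
    exact measure_mono_null (fun x hx (hxt : T x = t) => htB (hxt ▸ hx.2)) ht

theorem setLIntegral_eq (hd : IsDisintegration ν T μ lam) (hT : Measurable T) {A : Set Z}
    (hA : MeasurableSet A) {B : Set Y} (hB : MeasurableSet B) :
    ∫⁻ t in B, lam t A ∂μ = ν (A ∩ T ⁻¹' B) := by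
  rw [hd.measure_eq_lintegral (hA.inter (hT hB)), ← lintegral_indicator hB]
  exact lintegral_congr_ae <| (hd.ae_measure_inter_preimage_eq A B).mono fun _ h => h.symm

theorem ae_eq [MeasurableSpace.CountablyGenerated Z] [IsFiniteMeasure ν] [SigmaFinite μ]
    (hT : Measurable T) (hd : IsDisintegration ν T μ lam) (hd' : IsDisintegration ν T μ lam') :
    ∀ᵐ t ∂μ, lam t = lam' t := by
  obtain ⟨C, hCc, hCpi, hCmeas, hCgen⟩ :=
    MeasurableSpace.exists_countable_isPiSystem_generateFrom Z
  have hAE : ∀ A, MeasurableSet A → ∀ᵐ t ∂μ, lam t A = lam' t A := fun A hA =>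
    ae_eq_of_forall_setLIntegral_eq_of_sigmaFinite₀ (hd.aemeasurable_apply hA)
      (hd'.aemeasurable_apply hA) fun B hB _ => by
        rw [hd.setLIntegral_eq hT hA hB, hd'.setLIntegral_eq hT hA hB]
  have hfin : ∀ᵐ t ∂μ, lam t Set.univ < ∞ :=
    ae_lt_top' (hd.aemeasurable_apply .univ)
      (hd.measure_eq_lintegral .univ ▸ measure_ne_top ν _)
  filter_upwards [(ae_ball_iff hCc).2 fun A hA => hAE A (hCmeas A hA),
    hAE Set.univ .univ, hfin] with t hC huniv hlt
  have : IsFiniteMeasure (lam t) := ⟨hlt⟩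
  exact ext_of_generate_finite C hCgen hCpi hC huniv

theorem map {φ : Z → Z'} (hφ : MeasurableEmbedding φ) {T' : Z' → Y} (hT : T' ∘ φ = T)
    (hd : IsDisintegration ν T μ lam) :
    IsDisintegration (ν.map φ) T' μ (fun t => (lam t).map φ) := by
  subst hT
  refine ⟨?_, fun f hf => ?_, fun f hf => ?_⟩
  · filter_upwards [hd.1] with t ht
    rwa [hφ.map_apply]
  · simpa only [hφ.lintegral_map] using hd.2.1 (fun x => f (φ x)) (hf.comp hφ.measurable)
  · simpa only [hφ.lintegral_map] using hd.2.2 (fun x => f (φ x)) (hf.comp hφ.measurable)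

theorem withDensity {f : Z → ℝ≥0∞} (hf : Measurable f) (hd : IsDisintegration ν T μ lam) :
    IsDisintegration (ν.withDensity f) T μ (fun t => (lam t).withDensity f) := by
  refine ⟨?_, fun g hg => ?_, fun g hg => ?_⟩
  · filter_upwards [hd.1] with t ht
    exact withDensity_absolutelyContinuous _ _ ht
  · simpa only [lintegral_withDensity_eq_lintegral_mul _ hf hg] using hd.2.1 _ (hf.mul hg)
  · simpa only [lintegral_withDensity_eq_lintegral_mul _ hf hg] using hd.2.2 _ (hf.mul hg)

theorem ae_absolutelyContinuous [MeasurableSpace.CountablyGenerated Z] [SigmaFinite ν]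
    [IsFiniteMeasure ρ] [SigmaFinite μ] (hT : Measurable T) (hd : IsDisintegration ν T μ lam)
    (hd' : IsDisintegration ρ T μ lam') (hρν : ρ ≪ ν) :
    ∀ᵐ t ∂μ, lam' t ≪ lam t := by
  have hρ : ν.withDensity (ρ.rnDeriv ν) = ρ := Measure.withDensity_rnDeriv_eq ρ ν hρν
  have hd'' := hρ ▸ hd.withDensity (Measure.measurable_rnDeriv ρ ν)
  filter_upwards [hd'.ae_eq hT hd''] with t ht
  exact ht ▸ withDensity_absolutelyContinuous _ _

end IsDisintegration

theorem disintegration_flip_invariant_general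
    {X : Type*} [MetricSpace X] [CompactSpace X]
    [MeasurableSpace X] [BorelSpace X]
    (ν : Measure (X × X)) [IsFiniteMeasure ν]
    (μ : Measure X) [SigmaFinite μ]
    (hflip₁ : ν.map Prod.swap ≪ ν) (hflip₂ : ν ≪ ν.map Prod.swap)
    (lam₁ lam₂ : X → Measure (X × X))
    (hdis₁ : IsDisintegration ν Prod.fst μ lam₁)
    (hdis₂ : IsDisintegration ν Prod.snd μ lam₂) :
    ∀ᵐ t ∂μ,
      (lam₁ t ≪ (lam₂ t).map Prod.swap ∧ (lam₂ t).map Prod.swap ≪ lam₁ t) ∧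
      ∀ s : X, 0 < lam₂ t {(s, t)} → 0 < lam₁ t {(t, s)} := by
  have hswap : MeasurableEmbedding (Prod.swap : X × X → X × X) :=
    MeasurableEquiv.prodComm.measurableEmbedding
  have hdis₂' : IsDisintegration (ν.map Prod.swap) Prod.fst μ fun t => (lam₂ t).map Prod.swap :=
    hdis₂.map hswap rfl
  filter_upwards [hdis₁.ae_absolutelyContinuous measurable_fst hdis₂' hflip₁,
    hdis₂'.ae_absolutelyContinuous measurable_fst hdis₁ hflip₂] with t hac₂ hac₁
  refine ⟨⟨hac₁, hac₂⟩, fun s hs => hac₂.pos_mono ?_⟩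
  rwa [hswap.map_apply, ← Set.singleton_prod_singleton, Set.preimage_swap_prod,
    Set.singleton_prod_singleton]

theorem disintegration_flip_invariant
    {X : Type*} [MetricSpace X] [CompactSpace X]
    [MeasurableSpace X] [BorelSpace X]
    (ν : Measure (X × X)) [IsFiniteMeasure ν]
    (μ : Measure X) [SigmaFinite μ]
    (habs₁ : ν.map Prod.fst ≪ μ) (habs₂ : ν.map Prod.snd ≪ μ)
    (hflip₁ : ν.map Prod.swap ≪ ν) (hflip₂ : ν ≪ ν.map Prod.swap)
    (lam₁ lam₂ : X → Measure (X × X))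
    (hdis₁ : IsDisintegration ν Prod.fst μ lam₁)
    (hdis₂ : IsDisintegration ν Prod.snd μ lam₂) :
    ∀ᵐ t ∂μ,
      (lam₁ t ≪ (lam₂ t).map Prod.swap ∧ (lam₂ t).map Prod.swap ≪ lam₁ t) ∧
      ∀ s : X, 0 < lam₂ t {(s, t)} → 0 < lam₁ t {(t, s)} :=
  disintegration_flip_invariant_general ν μ hflip₁ hflip₂ lam₁ lam₂ hdis₁ hdis₂
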